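/- (Uniqueness of weighted voting games from semivalues.) Let n ≥ 1, let p = (p_0,…,p_{n-1}) be a probability vector, let w, v ∈ ℝ^n with Σ_{i=1}^n w_i = Σ_{i=1}^n v_i, let θ ∈ ℝ, and set f(x) = sign(w·x − θ), g(x) = sign(v·x − θ). If \tilde f^p(i) = \tilde g^p(i) for all i ∈ {1,…,n}, then f(x) = g(x) for every x ∈ {-1,1}^n such that p_{wt(x)} + p_{wt(x)−1} ≠ 0 and |w·x − θ| + |v·x − θ| ≠ 0. -/

import Mathlib

/-! With `u = w - v`, the hypothesis `∑ uᵢ = 0` turns `∑ᵢ uᵢ (f̃ᵖ(i) - g̃ᵖ(i))` into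
`∑ₓ μ'_p(x)/2 · (f(x) - g(x)) · (u·x)`, which vanishes since the semivalues agree.
Every summand is nonnegative, because `sgn a - sgn b` has the sign of `a - b = u·x`,
so each summand vanishes; where `μ'_p(x) ≠ 0` this forces `f(x) = g(x)`. -/

open Finset

noncomputable section

/-- `sgn z` is `1` if `z ≥ 0` and `-1` otherwise. -/
def sgn (z : ℝ) : ℝ := if 0 ≤ z then 1 else -1

/-- The ±1 real value encoded by a Boolean coordinate (`true ↦ 1`, `false ↦ -1`). -/
def chi (b : Bool) : ℝ := if b then 1 else -1

/-- `wt x` is the number of coordinates of `x ∈ {-1,1}^n` equal to `1`. -/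
def wt {n : ℕ} (x : Fin n → Bool) : ℤ :=
  ((Finset.univ.filter fun i => x i = true).card : ℤ)

/-- Inner product `w · x` of a real vector `w` with a ±1 vector `x`. -/
def dotp {n : ℕ} (w : Fin n → ℝ) (x : Fin n → Bool) : ℝ :=
  ∑ i, w i * chi (x i)

/-- The `i`-th semivalue of `f : {-1,1}^n → {-1,1}` with respect to the
probability vector `p` (indexed by `ℤ`, with `p t = 0` out of range):
`∑_{x : x_i = -1} p_{wt x} f(x) x_i + ∑_{x : x_i = 1} p_{wt x - 1} f(x) x_i`. -/
def semivalue {n : ℕ} (p : ℤ → ℝ) (f : (Fin n → Bool) → ℝ) (i : Fin n) : ℝ :=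
  ∑ x : Fin n → Bool, (if x i then p (wt x - 1) else p (wt x)) * f x * chi (x i)

/-- `μ'_p(x) = p_{wt x} + p_{wt x - 1}`. -/
def mu' {n : ℕ} (p : ℤ → ℝ) (x : Fin n → Bool) : ℝ := p (wt x) + p (wt x - 1)

/-- The normalizing factor `Λ(p) = ∑_x μ'_p(x)`. -/
def lam (n : ℕ) (p : ℤ → ℝ) : ℝ := ∑ x : Fin n → Bool, mu' p x

/-- The probability distribution `μ_p(x) = μ'_p(x)/Λ(p)`. -/
def mu {n : ℕ} (p : ℤ → ℝ) (x : Fin n → Bool) : ℝ := mu' p x / lam n p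


lemma dotp_sub {n : ℕ} (w v : Fin n → ℝ) (x : Fin n → Bool) :
    dotp (fun i => w i - v i) x = dotp w x - dotp v x := by
  simp [dotp, sub_mul, Finset.sum_sub_distrib]

lemma semivalue_sub {n : ℕ} (p : ℤ → ℝ) (f g : (Fin n → Bool) → ℝ) (i : Fin n) :
    semivalue p (fun x => f x - g x) i = semivalue p f i - semivalue p g i := by
  simp only [semivalue, ← Finset.sum_sub_distrib]
  exact Finset.sum_congr rfl fun x _ => by ring

-- The weight of coordinate `i` is `μ'_p(x)/2 ± (p_{wt x - 1} - p_{wt x})/2`, and the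
-- `i`-independent part dies against `∑ uᵢ = 0`.
lemma sum_mul_weight_mul_chi {n : ℕ} (p : ℤ → ℝ) {u : Fin n → ℝ} (hu : ∑ i, u i = 0)
    (x : Fin n → Bool) :
    ∑ i, u i * ((if x i then p (wt x - 1) else p (wt x)) * chi (x i))
      = mu' p x / 2 * dotp u x := by
  have split : ∀ i, u i * ((if x i then p (wt x - 1) else p (wt x)) * chi (x i))
      = mu' p x / 2 * (u i * chi (x i)) + (p (wt x - 1) - p (wt x)) / 2 * u i := by
    intro i
    by_cases h : x i <;> simp [h, chi, mu'] <;> ring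
  rw [Finset.sum_congr rfl fun i _ => split i, Finset.sum_add_distrib, ← Finset.mul_sum,
    ← Finset.mul_sum, hu, mul_zero, add_zero, dotp]

lemma sum_mul_semivalue {n : ℕ} (p : ℤ → ℝ) (h : (Fin n → Bool) → ℝ) {u : Fin n → ℝ}
    (hu : ∑ i, u i = 0) :
    ∑ i, u i * semivalue p h i = ∑ x, mu' p x / 2 * (h x * dotp u x) := by
  simp only [semivalue, Finset.mul_sum]
  rw [Finset.sum_comm]
  refine Finset.sum_congr rfl fun x _ => ?_
  rw [mul_left_comm, ← sum_mul_weight_mul_chi p hu x, Finset.mul_sum]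
  exact Finset.sum_congr rfl fun i _ => by ring

lemma sgn_sub_sgn_mul_sub_nonneg (a b c : ℝ) : 0 ≤ (sgn (a - c) - sgn (b - c)) * (a - b) := by
  unfold sgn
  split_ifs with ha hb hb <;> nlinarith

lemma sgn_eq_of_sgn_sub_sgn_mul_sub_eq_zero {a b c : ℝ}
    (h : (sgn (a - c) - sgn (b - c)) * (a - b) = 0) : sgn (a - c) = sgn (b - c) := by
  unfold sgn at h ⊢
  split_ifs at h ⊢ with ha hb hb <;> first | rfl | (exfalso; nlinarith)

theorem stmt15_general (n : ℕ) (p : ℤ → ℝ)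
    (hp_nonneg : ∀ t : ℤ, 0 ≤ p t)
    (w v : Fin n → ℝ) (hwv : ∑ i, w i = ∑ i, v i) (θ : ℝ)
    (f g : (Fin n → Bool) → ℝ)
    (hf : ∀ x, f x = sgn (dotp w x - θ))
    (hg : ∀ x, g x = sgn (dotp v x - θ))
    (hsv : ∀ i : Fin n, semivalue p f i = semivalue p g i) :
    ∀ x : Fin n → Bool,
      p (wt x) + p (wt x - 1) ≠ 0 →
      |dotp w x - θ| + |dotp v x - θ| ≠ 0 →
      f x = g x := by
  intro x hx _
  have hu : ∑ i, (w i - v i) = 0 := by rw [Finset.sum_sub_distrib, hwv, sub_self]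
  have summand_nonneg : ∀ y, 0 ≤ mu' p y / 2 * ((f y - g y) * dotp (fun i => w i - v i) y) := by
    intro y
    have hμ : 0 ≤ mu' p y := add_nonneg (hp_nonneg _) (hp_nonneg _)
    rw [hf, hg, dotp_sub]
    exact mul_nonneg (by positivity) (sgn_sub_sgn_mul_sub_nonneg _ _ θ)
  have sum_zero : ∑ y, mu' p y / 2 * ((f y - g y) * dotp (fun i => w i - v i) y) = 0 := by
    rw [← sum_mul_semivalue p (fun y => f y - g y) hu]
    simp only [semivalue_sub, hsv, sub_self, mul_zero, Finset.sum_const_zero]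
  have summand_zero := (Finset.sum_eq_zero_iff_of_nonneg fun y _ => summand_nonneg y).mp
    sum_zero x (Finset.mem_univ x)
  have hμx : mu' p x ≠ 0 := hx
  rw [mul_eq_zero, or_iff_right (div_ne_zero hμx two_ne_zero), hf, hg, dotp_sub] at summand_zero
  rw [hf, hg]
  exact sgn_eq_of_sgn_sub_sgn_mul_sub_eq_zero summand_zero

theorem stmt15 (n : ℕ) (hn : 1 ≤ n) (p : ℤ → ℝ)
    (hp_nonneg : ∀ t : ℤ, 0 ≤ p t)
    (hp_out : ∀ t : ℤ, (t < 0 ∨ (n : ℤ) ≤ t) → p t = 0)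
    (hp_sum : ∑ t ∈ Finset.range n, ((n - 1).choose t : ℝ) * p (t : ℤ) = 1)
    (w v : Fin n → ℝ) (hwv : ∑ i, w i = ∑ i, v i) (θ : ℝ)
    (f g : (Fin n → Bool) → ℝ)
    (hf : ∀ x, f x = sgn (dotp w x - θ))
    (hg : ∀ x, g x = sgn (dotp v x - θ))
    (hsv : ∀ i : Fin n, semivalue p f i = semivalue p g i) :
    ∀ x : Fin n → Bool,
      p (wt x) + p (wt x - 1) ≠ 0 →
      |dotp w x - θ| + |dotp v x - θ| ≠ 0 →
      f x = g x :=
  stmt15_general n p hp_nonneg w v hwv θ f g hf hg hsv
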